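/- Let 𝒱 be a finite set, f a non-increasing set function on 𝒱, γ ∈ (0,1] a supermodularity-ratio lower bound for f, and c a cost function on 𝒱. Let κ be a real number and let S* ⊆ 𝒱 satisfy f(S*) ≤ κ. Let s₁, …, s_l (with l ≥ 1) be a greedy sequence for (f, c) with G_i = {s₁,…,s_i}, such that f(G_{l−1}) > κ and f(G_l) ≤ κ. Assume γ·c(s_j) ≤ c(S*) for every j ∈ {1,…,l−1}. Then c(G_l) ≤ c(s_l) + (1/γ)·log( (f(∅) − κ)/(f(G_{l−1}) − κ) )·c(S*). -/

import Mathlib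

open Finset Real

/-! While the greedy set `G` still has `f G > κ`, adding all of `S*` to `G` lowers `f` by at
least `f G - κ`; by the supermodularity ratio this drop is at most `1/γ` times the sum of the
single-element gains `f G - f (G ∪ {v})`, `v ∈ S*`, and each of those is at most `c v` times the
best gain-per-cost ratio, which the greedy choice `s` attains. Hence the gap `D = f G - κ`
shrinks to at most `(1 - γ c(s) / c(S*)) D ≤ exp (-γ c(s) / c(S*)) D`, so
`γ c(s) ≤ c(S*) (log D - log D')`. Telescoping over the first `l - 1` greedy steps bounds their
total cost, and the last element is paid for separately. -/

section

variable {α : Type*} [DecidableEq α]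

def IsSupermodularityRatioBound (f : Finset α → ℝ) (γ : ℝ) : Prop :=
  ∀ A B : Finset α, A ⊆ B → ∀ v ∉ B, f A - f (insert v A) ≥ γ * (f B - f (insert v B))

def IsGreedyChoice (f : Finset α → ℝ) (c : α → ℝ) (G : Finset α) (s : α) : Prop :=
  ∀ a ∉ G, (f G - f (insert a G)) / c a ≤ (f G - f (insert s G)) / c s

theorem IsSupermodularityRatioBound.mul_sub_union_le_sum {f : Finset α → ℝ} {γ : ℝ}
    (hr : IsSupermodularityRatioBound f γ) (hf : Antitone f) (A T : Finset α) :
    γ * (f A - f (A ∪ T)) ≤ ∑ v ∈ T, (f A - f (insert v A)) := by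
  induction T using Finset.induction_on with
  | empty => simp
  | @insert v T hvT ih =>
    rw [sum_insert hvT, union_insert]
    have hgain : 0 ≤ f A - f (insert v A) := sub_nonneg.2 (hf (subset_insert v A))
    by_cases hv : v ∈ A ∪ T
    · rw [insert_eq_self.2 hv]
      linarith
    · have := hr A (A ∪ T) subset_union_left v hv
      linarith

theorem IsGreedyChoice.mul_sub_le {f : Finset α → ℝ} {c : α → ℝ} {G : Finset α} {s : α}
    (hs : IsGreedyChoice f c G s) {γ κ : ℝ} (hr : IsSupermodularityRatioBound f γ)
    (hf : Antitone f) (hγ : 0 ≤ γ) (hc : ∀ v, 0 < c v) {S : Finset α} (hS : f S ≤ κ) :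
    γ * c s * (f G - κ) ≤ (∑ v ∈ S, c v) * (f G - f (insert s G)) := by
  set ρ := (f G - f (insert s G)) / c s
  have hρ : 0 ≤ ρ := div_nonneg (sub_nonneg.2 (hf (subset_insert s G))) (hc s).le
  have hgain_le : ∀ v ∈ S, f G - f (insert v G) ≤ c v * ρ := by
    intro v _
    by_cases hv : v ∈ G
    · rw [insert_eq_self.2 hv, sub_self]
      exact mul_nonneg (hc v).le hρ
    · rw [mul_comm, ← div_le_iff₀ (hc v)]
      exact hs v hv
  have hdrop : γ * (f G - κ) ≤ (∑ v ∈ S, c v) * ρ :=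
    calc γ * (f G - κ) ≤ γ * (f G - f (G ∪ S)) := by
          gcongr
          exact (hf subset_union_right).trans hS
      _ ≤ ∑ v ∈ S, (f G - f (insert v G)) := hr.mul_sub_union_le_sum hf G S
      _ ≤ ∑ v ∈ S, c v * ρ := sum_le_sum hgain_le
      _ = (∑ v ∈ S, c v) * ρ := (sum_mul S c ρ).symm
  calc γ * c s * (f G - κ) = γ * (f G - κ) * c s := by ring
    _ ≤ (∑ v ∈ S, c v) * ρ * c s := by gcongr; exact (hc s).le
    _ = (∑ v ∈ S, c v) * (f G - f (insert s G)) := by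
          rw [mul_assoc, div_mul_cancel₀ _ (hc s).ne']

/-- `1 - b / a ≤ log (a / b)`, scaled by `C`. -/
theorem le_mul_log_sub_log_of_mul_le {a b C y : ℝ} (ha : 0 < a) (hb : 0 < b) (hC : 0 ≤ C)
    (h : y * a ≤ C * (a - b)) : y ≤ C * (log a - log b) := by
  have hlog : (a - b) / a ≤ log a - log b := by
    rw [← log_div ha.ne' hb.ne']
    convert one_sub_inv_le_log_of_pos (div_pos ha hb) using 1
    field_simp
  calc y ≤ C * ((a - b) / a) := by
        rw [mul_div_assoc', le_div_iff₀ ha]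
        exact h
    _ ≤ C * (log a - log b) := by gcongr

theorem greedy_prefix_cost_le {f : Finset α → ℝ} {c : α → ℝ} {γ κ : ℝ}
    (hr : IsSupermodularityRatioBound f γ) (hf : Antitone f) (hγ : 0 < γ)
    (hc : ∀ v, 0 < c v) {S : Finset α} (hS : f S ≤ κ) (g : ℕ → α) (n : ℕ)
    (hgreedy : ∀ i < n, IsGreedyChoice f c ((range i).image g) (g i))
    (hn : κ < f ((range n).image g)) :
    ∑ i ∈ range n, c (g i) ≤
      1 / γ * log ((f ∅ - κ) / (f ((range n).image g) - κ)) * ∑ v ∈ S, c v := by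
  set G : ℕ → Finset α := fun i => (range i).image g
  set C := ∑ v ∈ S, c v
  have hgap : ∀ i ≤ n, 0 < f (G i) - κ := fun i hi =>
    sub_pos.2 (hn.trans_le (hf (image_subset_image (range_subset_range.2 hi))))
  have hG0 : G 0 = ∅ := by simp [G]
  have hstep : ∀ i < n, γ * c (g i) ≤ C * (log (f (G i) - κ) - log (f (G (i + 1)) - κ)) := by
    intro i hi
    have hsucc : G (i + 1) = insert (g i) (G i) := by simp [G, range_add_one, image_insert]
    refine le_mul_log_sub_log_of_mul_le (hgap i hi.le) (hgap (i + 1) hi) ?_ ?_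
    · exact sum_nonneg fun v _ => (hc v).le
    · rw [sub_sub_sub_cancel_right, hsucc]
      exact (hgreedy i hi).mul_sub_le hr hf hγ.le hc hS
  have htotal : γ * ∑ i ∈ range n, c (g i) ≤ C * (log (f ∅ - κ) - log (f (G n) - κ)) := by
    rw [mul_sum, ← hG0, ← sum_range_sub' (fun i => log (f (G i) - κ)), mul_sum]
    exact sum_le_sum fun i hi => hstep i (mem_range.1 hi)
  rw [log_div (hG0 ▸ (hgap 0 n.zero_le).ne') (hgap n le_rfl).ne']
  calc ∑ i ∈ range n, c (g i) = 1 / γ * (γ * ∑ i ∈ range n, c (g i)) := by field_simp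
    _ ≤ 1 / γ * (C * (log (f ∅ - κ) - log (f (G n) - κ))) := by gcongr
    _ = _ := by ring

end

/-- Zero-indexed: the greedy sequence is `g 0, …, g (l-1)`, `G i = (range i).image g`, and the
last added element `s_l` is `g (l-1)`. -/
theorem stmt_7_general {α : Type*} [DecidableEq α]
    (f : Finset α → ℝ)
    (hmono : ∀ A B : Finset α, A ⊆ B → f B ≤ f A)
    (γ : ℝ) (hγ0 : 0 < γ)
    (hratio : ∀ A B : Finset α, A ⊆ B → ∀ v ∉ B,
      f A - f (insert v A) ≥ γ * (f B - f (insert v B)))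
    (c : α → ℝ) (hc : ∀ v, 0 < c v)
    -- `Sstar` meets the value bound `κ`
    (κ : ℝ) (Sstar : Finset α) (hSκ : f Sstar ≤ κ)
    -- greedy sequence of length `l ≥ 1`
    (l : ℕ) (hl : 1 ≤ l) (g : ℕ → α)
    (hgreedy : ∀ i < l, ∀ a ∉ (Finset.range i).image g,
      (f ((Finset.range i).image g) - f (insert a ((Finset.range i).image g))) / c a ≤
        (f ((Finset.range i).image g) -
            f (insert (g i) ((Finset.range i).image g))) / c (g i))
    -- `f(G_{l-1}) > κ` and `f(G_l) ≤ κ`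
    (hGlpred : f ((Finset.range (l - 1)).image g) > κ) :
    ∑ v ∈ (Finset.range l).image g, c v ≤
      c (g (l - 1)) +
        1 / γ * Real.log ((f ∅ - κ) / (f ((Finset.range (l - 1)).image g) - κ)) *
          (∑ v ∈ Sstar, c v) := by
  have hprefix := greedy_prefix_cost_le hratio (fun A B h => hmono A B h) hγ0 hc hSκ g (l - 1)
    (fun i hi => hgreedy i (by omega)) hGlpred
  have hsplit : ∑ i ∈ range l, c (g i) = ∑ i ∈ range (l - 1), c (g i) + c (g (l - 1)) := by
    rw [← sum_range_succ, Nat.sub_add_cancel hl]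
  calc ∑ v ∈ (range l).image g, c v ≤ ∑ i ∈ range l, c (g i) :=
        sum_image_le_of_nonneg fun v _ => (hc v).le
    _ ≤ _ := by linarith

/-- cost bound for the greedy algorithm for minimum-cost subset selection
subject to a value bound `κ`. Zero-indexed greedy sequence `g 0, …, g (l-1)` of length
`l ≥ 1`, with `G i = (range i).image g`; the last added element `s_l` is `g (l-1)`. -/
theorem stmt_7 {α : Type*} [Fintype α] [DecidableEq α]
    (f : Finset α → ℝ)
    (hmono : ∀ A B : Finset α, A ⊆ B → f B ≤ f A)
    (γ : ℝ) (hγ0 : 0 < γ) (hγ1 : γ ≤ 1)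
    (hratio : ∀ A B : Finset α, A ⊆ B → ∀ v ∉ B,
      f A - f (insert v A) ≥ γ * (f B - f (insert v B)))
    (c : α → ℝ) (hc : ∀ v, 0 < c v)
    -- `Sstar` meets the value bound `κ`
    (κ : ℝ) (Sstar : Finset α) (hSκ : f Sstar ≤ κ)
    -- greedy sequence of length `l ≥ 1`
    (l : ℕ) (hl : 1 ≤ l) (g : ℕ → α)
    (hdist : ∀ i < l, g i ∉ (Finset.range i).image g)
    (hgreedy : ∀ i < l, ∀ a ∉ (Finset.range i).image g,
      (f ((Finset.range i).image g) - f (insert a ((Finset.range i).image g))) / c a ≤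
        (f ((Finset.range i).image g) -
            f (insert (g i) ((Finset.range i).image g))) / c (g i))
    -- `f(G_{l-1}) > κ` and `f(G_l) ≤ κ`
    (hGlpred : f ((Finset.range (l - 1)).image g) > κ)
    (hGl : f ((Finset.range l).image g) ≤ κ)
    -- `γ·c(s_j) ≤ c(Sstar)` for every `j ∈ {1, …, l−1}`, i.e. zero-indexed `j < l - 1`
    (hcost : ∀ j < l - 1, γ * c (g j) ≤ ∑ v ∈ Sstar, c v) :
    ∑ v ∈ (Finset.range l).image g, c v ≤
      c (g (l - 1)) +
        1 / γ * Real.log ((f ∅ - κ) / (f ((Finset.range (l - 1)).image g) - κ)) *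
          (∑ v ∈ Sstar, c v) :=
  stmt_7_general f hmono γ hγ0 hratio c hc κ Sstar hSκ l hl g hgreedy hGlpred
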